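/- arXiv:2601.11500 — 2 statements merged into one kernel-verified Lean document; each statement's English description precedes it below -/
import Mathlib

section
/- If M : Matrix n n ℂ is positive semidefinite and A : Matrix n n ℂ is Hermitian with positive part A₊, then max(0, Re(Tr(M * A))) ≤ Re(Tr(M * A₊)). -/
/-!
Since `0 ≤ max x 0` and `x ≤ max x 0`, monotonicity of the functional calculus gives
`0 ≤ A₊` and `A ≤ A₊` in the Loewner order. Pairing against a positive semidefinite `M`
is monotone, because `Tr (M * Cᴴ * C) = Tr (C * M * Cᴴ) ≥ 0`; hence both `0` and
`Re Tr (M * A)` are at most `Re Tr (M * A₊)`.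
-/

open Matrix
open scoped ComplexOrder

/-- The positive part of a matrix, given by the continuous functional calculus
applied to `fun x => max x 0` (for a Hermitian matrix this replaces each
eigenvalue `x` in the spectral decomposition by `max x 0`). -/
noncomputable def matPosPart {n : Type*} [Fintype n] [DecidableEq n]
    (A : Matrix n n ℂ) : Matrix n n ℂ :=
  cfc (fun x : ℝ => max x 0) A

namespace Matrix

open scoped MatrixOrder

lemma PosSemidef.trace_mul_nonneg {n 𝕜 : Type*} [Fintype n] [RCLike 𝕜] {A B : Matrix n n 𝕜}
    (hA : A.PosSemidef) (hB : B.PosSemidef) : 0 ≤ (A * B).trace := by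
  classical
  obtain ⟨C, rfl⟩ := CStarAlgebra.nonneg_iff_eq_star_mul_self.mp hB.nonneg
  rw [← mul_assoc, trace_mul_cycle]
  exact (hA.mul_mul_conjTranspose_same C).trace_nonneg

variable {n : Type*} [Fintype n] [DecidableEq n]

lemma posSemidef_matPosPart (A : Matrix n n ℂ) : (matPosPart A).PosSemidef :=
  nonneg_iff_posSemidef.mp <| cfc_nonneg fun x _ => le_max_right x 0

lemma IsHermitian.le_matPosPart {A : Matrix n n ℂ} (hA : A.IsHermitian) : A ≤ matPosPart A := by
  conv_lhs => rw [← cfc_id ℝ A hA.isSelfAdjoint]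
  exact cfc_mono fun x _ => le_max_left x 0

end Matrix

/-- If `M` is positive semidefinite and `A` is Hermitian, then
`max 0 (Re (Tr (M * A))) ≤ Re (Tr (M * A₊))`. -/
theorem max_trace_mul_le_trace_mul_posPart
    {n : Type*} [Fintype n] [DecidableEq n]
    (M A : Matrix n n ℂ) (hM : M.PosSemidef) (hA : A.IsHermitian) :
    max 0 (M * A).trace.re ≤ (M * matPosPart A).trace.re := by
  have hpos := hM.trace_mul_nonneg (posSemidef_matPosPart A)
  have hgap := hM.trace_mul_nonneg (le_iff.mp hA.le_matPosPart)
  rw [mul_sub, trace_sub] at hgap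
  exact max_le (Complex.nonneg_iff.mp hpos).1 (sub_nonneg.mp (Complex.nonneg_iff.mp hgap).1)
end

section
/- Monotonicity of the quantum hockey-stick divergence in γ at γ = 1: let n be a nonempty finite type and ρ, ρ' : Matrix n n ℂ density matrices. For every γ ≥ 1, Re(Tr((ρ - γ • ρ')₊)) ≤ Re(Tr((ρ - ρ')₊)); consequently the λ-Dobrushin bound established for the trace distance D_1^q also bounds D_γ^q for all γ ≥ 1. -/
/-!
`A ↦ Tr A₊` is monotone in the Loewner order. If `P` is the spectral projection of `A` onto its
positive eigenspace, then `Tr A₊ = Tr (P A)`, and for `A ≤ B` we get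
`Tr (P A) ≤ Tr (P B) ≤ Tr (P B₊) ≤ Tr B₊`, each step being `Tr (X Y) ≥ 0` for `X, Y ≥ 0`
(with `X = P` twice, then `X = 1 - P`). Since `ρ - γ ρ' ≤ ρ - ρ'` for `γ ≥ 1`, the theorem follows.
-/

open Matrix
open scoped ComplexOrder

open scoped MatrixOrder

namespace Matrix

variable {n 𝕜 : Type*} [Fintype n] [DecidableEq n] [RCLike 𝕜]

lemma trace_mul_nonneg {P M : Matrix n n 𝕜} (hP : 0 ≤ P) (hM : 0 ≤ M) : 0 ≤ (P * M).trace := by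
  obtain ⟨S, rfl⟩ := CStarAlgebra.nonneg_iff_eq_star_mul_self.mp hP
  rw [mul_assoc, trace_mul_comm]
  exact (star_right_conjugate_nonneg hM S).posSemidef.trace_nonneg

lemma trace_mul_le_trace_mul_left {P M N : Matrix n n 𝕜} (hP : 0 ≤ P) (hMN : M ≤ N) :
    (P * M).trace ≤ (P * N).trace := by
  simpa [mul_sub] using trace_mul_nonneg hP (sub_nonneg.mpr hMN)

lemma trace_mul_le_trace_mul_right {P Q M : Matrix n n 𝕜} (hPQ : P ≤ Q) (hM : 0 ≤ M) :
    (P * M).trace ≤ (Q * M).trace := by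
  simpa [sub_mul] using trace_mul_nonneg (sub_nonneg.mpr hPQ) hM

lemma IsHermitian.exists_posPart_eq_mul {A : Matrix n n 𝕜} (hA : A.IsHermitian) :
    ∃ P : Matrix n n 𝕜, 0 ≤ P ∧ P ≤ 1 ∧ A⁺ = P * A := by
  let g : ℝ → ℝ := fun x => if 0 < x then 1 else 0
  have hg : ContinuousOn g (spectrum ℝ A) := A.finite_real_spectrum.continuousOn g
  refine ⟨cfc g A, cfc_nonneg fun x _ => ?_, cfc_le_one g A fun x _ => ?_, ?_⟩
  · dsimp only [g]; split_ifs <;> norm_num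
  · dsimp only [g]; split_ifs <;> norm_num
  · have hgA : cfc g A * A = cfc (fun x => g x * x) A := by
      rw [cfc_mul g (fun x => x) A, cfc_id' ℝ A hA.isSelfAdjoint]
    rw [hgA, CFC.posPart_def, cfcₙ_eq_cfc]
    refine cfc_congr fun x _ => ?_
    dsimp only [g]; split_ifs with hx
    · simp [hx.le]
    · simp [not_lt.mp hx]

lemma trace_posPart_mono {A B : Matrix n n 𝕜} (hB : B.IsHermitian) (hAB : A ≤ B) :
    A⁺.trace ≤ B⁺.trace := by
  have hA : A.IsHermitian := by simpa using hB.sub (le_iff.mp hAB).isHermitian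
  obtain ⟨P, hP₀, hP₁, hPA⟩ := hA.exists_posPart_eq_mul
  calc A⁺.trace = (P * A).trace := by rw [hPA]
    _ ≤ (P * B).trace := trace_mul_le_trace_mul_left hP₀ hAB
    _ ≤ (P * B⁺).trace := trace_mul_le_trace_mul_left hP₀ (CFC.le_posPart hB.isSelfAdjoint)
    _ ≤ (1 * B⁺).trace := trace_mul_le_trace_mul_right hP₁ (CFC.posPart_nonneg B)
    _ = B⁺.trace := by rw [one_mul]

end Matrix

lemma matPosPart_eq_posPart {n : Type*} [Fintype n] [DecidableEq n] (A : Matrix n n ℂ) :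
    matPosPart A = A⁺ := by
  rw [CFC.posPart_def, cfcₙ_eq_cfc]; rfl

theorem quantum_hockeyStick_le_traceDist_general
    {n : Type*} [Fintype n] [DecidableEq n]
    (ρ ρ' : Matrix n n ℂ)
    (hρ : ρ.IsHermitian)
    (hρ' : ρ'.IsHermitian) (hρ'psd : ρ'.PosSemidef) :
    ∀ γ : ℝ, 1 ≤ γ →
      (matPosPart (ρ - γ • ρ')).trace.re ≤ (matPosPart (ρ - ρ')).trace.re := by
  intro γ hγ
  have hle : ρ - γ • ρ' ≤ ρ - ρ' := by
    have hdiff : ρ - ρ' - (ρ - γ • ρ') = (γ - 1) • ρ' := by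
      rw [sub_smul, one_smul]; abel
    rw [le_iff, hdiff]
    exact hρ'psd.smul (sub_nonneg.mpr hγ)
  rw [matPosPart_eq_posPart, matPosPart_eq_posPart]
  exact (Complex.le_def.mp (trace_posPart_mono (hρ.sub hρ') hle)).1

/-- Monotonicity of the quantum hockey-stick divergence in `γ` at `γ = 1`:
for density matrices `ρ, ρ'` and every `γ ≥ 1`,
`D_γ^q(ρ‖ρ') ≤ D_1^q(ρ‖ρ')`. -/
theorem quantum_hockeyStick_le_traceDist
    {n : Type*} [Fintype n] [DecidableEq n] [Nonempty n]
    (ρ ρ' : Matrix n n ℂ)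
    (hρ : ρ.IsHermitian) (hρpsd : ρ.PosSemidef) (hρtr : ρ.trace = 1)
    (hρ' : ρ'.IsHermitian) (hρ'psd : ρ'.PosSemidef) (hρ'tr : ρ'.trace = 1) :
    ∀ γ : ℝ, 1 ≤ γ →
      (matPosPart (ρ - γ • ρ')).trace.re ≤ (matPosPart (ρ - ρ')).trace.re :=
  quantum_hockeyStick_le_traceDist_general ρ ρ' hρ hρ' hρ'psd
end
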